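/- Let G be a group, N a normal subgroup of G, and Q = G/N the quotient. Let α be an automorphism of G that induces the identity on N and on Q (i.e., α(n) = n for all n ∈ N, and for every g ∈ G the element g⁻¹·α(g) lies in N). Suppose that G acts trivially by conjugation on the center of N, and that the only group homomorphism from Q to the center of N is the trivial one. Then α is the identity automorphism of G. -/

import Mathlib

/-- Let `G` be a group, `N` a normal subgroup of `G`, and `Q = G/N` the quotient.
Let `α` be an automorphism of `G` inducing the identity on `N` (i.e. `α n = n` for
all `n ∈ N`) and on `Q` (i.e. `g⁻¹ * α g ∈ N` for all `g`). Suppose `G` acts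
trivially by conjugation on the center of `N`, and that the only group homomorphism
from `Q` to the center of `N` is trivial. Then `α` is the identity automorphism. -/
theorem autom_of_ext_is_id {G : Type*} [Group G] (N : Subgroup G) [N.Normal]
    (α : G ≃* G)
    (hN : ∀ n ∈ N, α n = n)
    (hQ : ∀ g : G, g⁻¹ * α g ∈ N)
    (hcent : ∀ g : G, ∀ z ∈ Subgroup.map N.subtype (Subgroup.center N),
      g * z * g⁻¹ = z)
    (hhom : ∀ f : (G ⧸ N) →* Subgroup.center N, f = 1) :
    α = MulEquiv.refl G := by
  -- key commutation: g⁻¹ * α g commutes with every element of N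
  have key : ∀ g : G, ∀ n ∈ N, (g⁻¹ * α g) * n = n * (g⁻¹ * α g) := by
    intro g n hn
    have h1 : α (g * n * g⁻¹) = g * n * g⁻¹ :=
      hN _ (Subgroup.Normal.conj_mem ‹N.Normal› n hn g)
    have h2 : α (g * n * g⁻¹) = α g * n * (α g)⁻¹ := by
      rw [map_mul, map_mul, map_inv, hN n hn]
    have h3 : α g * n * (α g)⁻¹ = g * n * g⁻¹ := h2.symm.trans h1
    have h4 : α g * n = g * n * g⁻¹ * α g := by
      have := congrArg (· * α g) h3
      simpa [mul_assoc] using this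
    calc (g⁻¹ * α g) * n = g⁻¹ * (α g * n) := by group
      _ = g⁻¹ * (g * n * g⁻¹ * α g) := by rw [h4]
      _ = n * (g⁻¹ * α g) := by group
  have hz : ∀ g : G, (⟨g⁻¹ * α g, hQ g⟩ : N) ∈ Subgroup.center N := by
    intro g
    rw [Subgroup.mem_center_iff]
    intro m
    exact Subtype.ext (key g m m.2).symm
  have hmem : ∀ g : G, g⁻¹ * α g ∈ Subgroup.map N.subtype (Subgroup.center N) :=
    fun g => ⟨⟨g⁻¹ * α g, hQ g⟩, hz g, rfl⟩
  have hconj : ∀ g h : G, h⁻¹ * (g⁻¹ * α g) * h = g⁻¹ * α g := by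
    intro g h
    have := hcent h⁻¹ _ (hmem g)
    simpa using this
  let F : G →* Subgroup.center N :=
  { toFun := fun g => ⟨⟨g⁻¹ * α g, hQ g⟩, hz g⟩
    map_one' := by ext; simp
    map_mul' := by
      intro g h
      apply Subtype.ext; apply Subtype.ext
      show (g * h)⁻¹ * α (g * h) = (g⁻¹ * α g) * (h⁻¹ * α h)
      calc (g * h)⁻¹ * α (g * h) = h⁻¹ * (g⁻¹ * α g) * h * (h⁻¹ * α h) := by
            rw [map_mul]; group
        _ = (g⁻¹ * α g) * (h⁻¹ * α h) := by rw [hconj g h] }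
  have hFN : ∀ n ∈ N, F n = 1 := by
    intro n hn
    apply Subtype.ext; apply Subtype.ext
    show n⁻¹ * α n = 1
    rw [hN n hn, inv_mul_cancel]
  have hlift := hhom (QuotientGroup.lift N F hFN)
  have hF1 : ∀ g : G, F g = 1 := by
    intro g
    have : QuotientGroup.lift N F hFN (QuotientGroup.mk g) = 1 := by rw [hlift]; rfl
    exact this
  ext g
  have h1 : g⁻¹ * α g = 1 := by
    have h := hF1 g
    rw [Subtype.ext_iff, Subtype.ext_iff] at h
    exact h
  have : α g = g := by
    have := congrArg (g * ·) h1
    simpa [mul_assoc] using this  -- g * (g⁻¹ * α g) = g * 1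
  simpa using this
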